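/- With notation as follows: p prime, n ≥ 1, 1 ≤ t ≤ n, n′ = n+t+1, a fixed quadratic form Q = Σ_{r=1}^t Σ_{α=1}^{m_r−1} x_{π_r(α)} x_{π_r(α+1)} + Σ_{r=2}^{t+1} c_r x_{n+r} x_{n+1} + Σ_{2≤μ<ν≤t} d_{μν} x_{n+μ} x_{n+ν} + Σ_{r=1}^t x_{π_r(1)} x_{n+r} (coefficients in Z_p, c_{t+1} ≠ 0), and the sets Z(d,e,e′) = { ξ(Q + Σ_{α=1}^n d_α x_α + Σ_{β=1}^{t+1} e_β x_{n+β} + e′ + Σ_{r=1}^t h_r x_{π_r(m_r)}) : h ∈ (Z_p)^t } for (d,e,e′) ∈ (Z_p)^{n+t+2}: the distinct sets Z(d,e,e′) are pairwise disjoint, each has exactly p^t elements, and their union equals the entire coset ξ(Q) + GRM_p(n′,1) (of size p^{n′+1}); that is, the p^{n′+1−t} distinct ZCZ sequence sets with fixed quadratic form Q partition the second-order coset ξ(Q) + GRM_p(n′,1). -/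

import Mathlib

/-!
Every word of the coset `ξ(Q) + GRM_p(n', 1)` is `ξ(Q + a₀ + ∑ aᵢ xᵢ)` for exactly one affine
coefficient vector `a`: base-`p` digits hit every point of `(Z_p)^{n'}`, and an affine function
determines its coefficients. Under this bijection `Z(d, e, e')` is the image of the coset
`(e', d, e) + W` of the subgroup `W` spanned by the unit vectors at the last positions
`π_r(m_r)`, which are distinct because `π` is injective. So the sets `Z` are the images of the
cosets of `W`: pairwise equal or disjoint, of size `|W| = p^t`, covering all `p^{n'+1}` words,
and by Lagrange `p^{n'+1} / p^t` in number.
-/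

open Finset

/-- The `k`-th base-`p` digit of `x`, viewed as an element of `ZMod p`. -/
def digitZ (p x k : ℕ) : ZMod p := ((x / p ^ k) % p : ℕ)

/-- The `Z_p`-valued vector `ξ(f)` of length `p^m` associated with an extended Boolean
function `f : (Z_p)^m → Z_p`: its `x`-th entry is `f(x₁,…,x_m)` where `(x₁,…,x_m)`
are the base-`p` digits of `x`. -/
def xiVec (p m : ℕ) (f : (Fin m → ZMod p) → ZMod p) : Fin (p ^ m) → ZMod p :=
  fun x => f fun k => digitZ p (x : ℕ) (k : ℕ)

/-- The first-order generalized Reed–Muller code `GRM_p(m,1)`: all evaluation vectors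
of affine functions `a₀ + ∑ᵢ aᵢ xᵢ`. -/
def GRM1 (p m : ℕ) : Set (Fin (p ^ m) → ZMod p) :=
  { v | ∃ (a0 : ZMod p) (a : Fin m → ZMod p),
      v = xiVec p m fun x => a0 + ∑ i : Fin m, a i * x i }

section CosetImage

variable {G H X : Type*} [AddGroup G] [AddGroup H] (f : G → X) (ι : H →+ G)

def cosetImage (g : G) : Set X := Set.range fun h => f (g + ι h)

theorem cosetImage_eq_of_neg_add_mem {g₁ g₂ : G} (hg : -g₁ + g₂ ∈ ι.range) :
    cosetImage f ι g₁ = cosetImage f ι g₂ := by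
  obtain ⟨k, hk⟩ := hg
  obtain rfl : g₂ = g₁ + ι k := by rw [hk, add_neg_cancel_left]
  simp only [cosetImage, add_assoc, ← map_add]
  exact ((Equiv.addLeft k).surjective.range_comp fun h => f (g₁ + ι h)).symm

variable {f}

theorem neg_add_mem_of_not_disjoint (hf : Function.Injective f) {g₁ g₂ : G}
    (h : ¬Disjoint (cosetImage f ι g₁) (cosetImage f ι g₂)) : -g₁ + g₂ ∈ ι.range := by
  obtain ⟨_, ⟨h₁, rfl⟩, h₂, hx⟩ := Set.not_disjoint_iff.1 h
  refine ⟨h₁ + -h₂, ?_⟩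
  rw [map_add, map_neg, eq_add_neg_of_add_eq (hf hx)]
  simp [add_assoc]

theorem cosetImage_eq_iff (hf : Function.Injective f) {g₁ g₂ : G} :
    cosetImage f ι g₁ = cosetImage f ι g₂ ↔ -g₁ + g₂ ∈ ι.range := by
  refine ⟨fun h => neg_add_mem_of_not_disjoint ι hf ?_, cosetImage_eq_of_neg_add_mem f ι⟩
  rw [h, Set.not_disjoint_iff_nonempty_inter, Set.inter_self]
  exact Set.range_nonempty _

theorem cosetImage_eq_or_disjoint (hf : Function.Injective f) (g₁ g₂ : G) :
    cosetImage f ι g₁ = cosetImage f ι g₂ ∨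
      Disjoint (cosetImage f ι g₁) (cosetImage f ι g₂) :=
  or_iff_not_imp_right.2 fun h =>
    cosetImage_eq_of_neg_add_mem f ι (neg_add_mem_of_not_disjoint ι hf h)

theorem ncard_cosetImage (hf : Function.Injective f) (hι : Function.Injective ι) (g : G) :
    (cosetImage f ι g).ncard = Nat.card H :=
  Set.ncard_range_of_injective (hf.comp ((add_right_injective g).comp hι))

theorem iUnion_cosetImage : ⋃ g, cosetImage f ι g = Set.range f :=
  (Set.iUnion_subset fun g => Set.range_comp_subset_range _ f).antisymm
    fun _ ⟨g, hg⟩ => Set.mem_iUnion.2 ⟨g, 0, by simp [hg]⟩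

theorem ncard_range_cosetImage (hf : Function.Injective f) :
    (Set.range (cosetImage f ι)).ncard = Nat.card (G ⧸ ι.range) := by
  let F : G ⧸ ι.range → Set X := Quotient.lift (cosetImage f ι) fun _ _ h =>
    cosetImage_eq_of_neg_add_mem f ι (QuotientAddGroup.leftRel_apply.1 h)
  have hF : Function.Injective F := by
    rintro ⟨g₁⟩ ⟨g₂⟩ h
    exact QuotientAddGroup.eq.2 ((cosetImage_eq_iff ι hf).1 h)
  have hrange : Set.range (cosetImage f ι) = Set.range F :=
    QuotientAddGroup.mk_surjective.range_comp F
  rw [hrange]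
  exact Set.ncard_range_of_injective hF

theorem ncard_range_cosetImage_mul_card (hf : Function.Injective f) (hι : Function.Injective ι) :
    (Set.range (cosetImage f ι)).ncard * Nat.card H = Nat.card G := by
  rw [ncard_range_cosetImage ι hf, Nat.card_congr (AddMonoidHom.ofInjective hι).toEquiv,
    ← AddSubgroup.card_eq_card_quotient_mul_card_addSubgroup]

end CosetImage

theorem digitZ_surjective (p m : ℕ) [NeZero p] :
    Function.Surjective fun x : Fin (p ^ m) => fun k : Fin m => digitZ p x k := by
  intro y
  let c : Fin m → Fin p := fun k => ⟨(y k).val, ZMod.val_lt _⟩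
  refine ⟨finFunctionFinEquiv c, funext fun k => ?_⟩
  have hdigit : (finFunctionFinEquiv c : ℕ) / p ^ (k : ℕ) % p = (y k).val :=
    congrArg Fin.val (congrFun (finFunctionFinEquiv.symm_apply_apply c) k)
  change ((_ % p : ℕ) : ZMod p) = y k
  rw [hdigit, ZMod.natCast_zmod_val]

theorem xiVec_injective (p m : ℕ) [NeZero p] : Function.Injective (xiVec p m) :=
  (digitZ_surjective p m).injective_comp_right

theorem affine_coeffs_injective {R ι : Type*} [Ring R] [Fintype ι] [DecidableEq ι] :
    Function.Injective fun a : R × (ι → R) => fun x : ι → R => a.1 + ∑ i, a.2 i * x i := by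
  intro a b h
  have h0 : a.1 = b.1 := by simpa using congrFun h 0
  refine Prod.ext h0 (funext fun i => ?_)
  simpa [h0, Pi.single_apply] using congrFun h (Pi.single i 1)

def cosetVec (p N : ℕ) (Q : (Fin N → ZMod p) → ZMod p) (a : ZMod p × (Fin N → ZMod p)) :
    Fin (p ^ N) → ZMod p :=
  xiVec p N fun x => Q x + (a.1 + ∑ i, a.2 i * x i)

theorem cosetVec_injective (p N : ℕ) [NeZero p] (Q : (Fin N → ZMod p) → ZMod p) :
    Function.Injective (cosetVec p N Q) := fun _ _ h =>
  affine_coeffs_injective (funext fun x => add_left_cancel (congrFun (xiVec_injective p N h) x))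

theorem range_cosetVec (p N : ℕ) (Q : (Fin N → ZMod p) → ZMod p) :
    Set.range (cosetVec p N Q) = {v | ∃ w ∈ GRM1 p N, v = xiVec p N Q + w} := by
  ext v
  simp only [Set.mem_range, GRM1, Set.mem_ofPred_eq, Prod.exists]
  constructor
  · rintro ⟨a0, a, rfl⟩
    exact ⟨_, ⟨a0, a, rfl⟩, rfl⟩
  · rintro ⟨_, ⟨a0, a, rfl⟩, rfl⟩
    exact ⟨a0, a, rfl⟩

section CoeffsAt

variable (R : Type*) {κ η : Type*} [Semiring R] [Fintype κ] [DecidableEq η] (J : κ → η)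

noncomputable def coeffsAt : (κ → R) →ₗ[R] R × (η → R) :=
  LinearMap.inr R R (η → R) ∘ₗ Fintype.linearCombination R fun r => Pi.single (J r) 1

variable {R J}

theorem coeffsAt_injective (hJ : Function.Injective J) : Function.Injective (coeffsAt R J) :=
  LinearMap.inr_injective.comp
    ((Pi.linearIndependent_single_one η R).comp J hJ).fintypeLinearCombination_injective

theorem fst_coeffsAt (h : κ → R) : (coeffsAt R J h).1 = 0 := rfl

theorem sum_snd_coeffsAt_mul [Fintype η] (h : κ → R) (x : η → R) :
    ∑ i, (coeffsAt R J h).2 i * x i = ∑ r, h r * x (J r) := by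
  simp only [coeffsAt, LinearMap.coe_comp, Function.comp_apply, LinearMap.inr_apply,
    Fintype.linearCombination_apply]
  simp [sum_mul, sum_comm (γ := η), Pi.single_apply]

end CoeffsAt

theorem injective_last_of_injective_sigma {κ β : Type*} {m : κ → ℕ} (hm : ∀ r, 1 ≤ m r)
    {π : κ → ℕ → β} (hπ : Function.Injective fun q : Σ r, Fin (m r) => π q.1 q.2) :
    Function.Injective fun r => π r (m r - 1) := fun r s hrs =>
  congrArg Sigma.fst <|
    @hπ ⟨r, m r - 1, by have := hm r; omega⟩ ⟨s, m s - 1, by have := hm s; omega⟩ hrs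

theorem sum_append_mul {R : Type*} [NonUnitalNonAssocSemiring R] {n k : ℕ} (d : Fin n → R)
    (e : Fin k → R) (x : Fin (n + k) → R) :
    ∑ i, Fin.append d e i * x i =
      ∑ α, d α * x (Fin.castLE (Nat.le_add_right n k) α) +
        ∑ β, e β * x ⟨n + β, by omega⟩ := by
  simp only [Fin.sum_univ_add, Fin.append_left, Fin.append_right]
  rfl

theorem exists_append_iff {R : Type*} {n k : ℕ} (P : R × (Fin (n + k) → R) → Prop) :
    (∃ (d : Fin n → R) (e : Fin k → R) (c : R), P (c, Fin.append d e)) ↔ ∃ a, P a := by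
  refine ⟨fun ⟨_, _, _, h⟩ => ⟨_, h⟩, ?_⟩
  rintro ⟨⟨c, a⟩, h⟩
  obtain ⟨⟨d, e⟩, rfl⟩ := (Fin.appendEquiv n k).surjective a
  exact ⟨d, e, c, h⟩

theorem setOf_xiVec_eq_cosetImage {p N t : ℕ} (Q : (Fin N → ZMod p) → ZMod p)
    {J : Fin t → Fin N} (a : ZMod p × (Fin N → ZMod p)) {F : (Fin N → ZMod p) → ZMod p}
    (hF : ∀ x, F x = Q x + (a.1 + ∑ i, a.2 i * x i)) :
    {v | ∃ h : Fin t → ZMod p, v = xiVec p N fun x => F x + ∑ r, h r * x (J r)} =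
      cosetImage (cosetVec p N Q) (coeffsAt (ZMod p) J).toAddMonoidHom a := by
  ext v
  refine exists_congr fun h => eq_comm.trans (Eq.congr_left ?_)
  refine congrArg (xiVec p N) (funext fun x => ?_)
  simp only [Prod.fst_add, Prod.snd_add, Pi.add_apply, add_mul, sum_add_distrib,
    LinearMap.toAddMonoidHom_coe, fst_coeffsAt, sum_snd_coeffsAt_mul, hF]
  ring

/-- partition of the coset: the distinct ZCZ sequence sets
`Z(d,e,e')` with fixed quadratic form `Q` are pairwise disjoint, each has exactly
`p^t` elements, and their union is the whole second-order coset `ξ(Q) + GRM_p(n',1)`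
(`n' = n+t+1`), which has size `p^{n'+1}`; i.e. the `p^{n'+1−t}` distinct ZCZ sequence
sets partition the coset. -/
theorem statement6
    (p n t : ℕ) [Fact p.Prime]
    (m : Fin t → ℕ) (hm : ∀ r, 1 ≤ m r)
    (π : Fin t → ℕ → Fin n)
    (hπ : Function.Bijective fun q : Σ r : Fin t, Fin (m r) => π q.1 (q.2 : ℕ))
    (Q : (Fin (n + t + 1) → ZMod p) → ZMod p)
    (Zset : (Fin n → ZMod p) → (Fin (t + 1) → ZMod p) → ZMod p →
      Set (Fin (p ^ (n + t + 1)) → ZMod p))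
    (hZ : ∀ d e e', Zset d e e' =
      { v | ∃ h : Fin t → ZMod p, v = xiVec p (n + t + 1) fun x =>
          Q x + (∑ α : Fin n, d α * x (Fin.castLE (by omega) α)) +
            (∑ β : Fin (t + 1), e β * x ⟨n + (β : ℕ), by have := β.isLt; omega⟩) + e' +
            ∑ r : Fin t, h r * x (Fin.castLE (by omega) (π r (m r - 1))) })
    :
    -- pairwise: two such sets are equal or disjoint
    (∀ (d₁ d₂ : Fin n → ZMod p) (e₁ e₂ : Fin (t + 1) → ZMod p) (e₁' e₂' : ZMod p),
      Zset d₁ e₁ e₁' = Zset d₂ e₂ e₂' ∨ Disjoint (Zset d₁ e₁ e₁') (Zset d₂ e₂ e₂')) ∧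
    -- each set has exactly p^t elements
    (∀ (d : Fin n → ZMod p) (e : Fin (t + 1) → ZMod p) (e' : ZMod p),
      (Zset d e e').ncard = p ^ t) ∧
    -- the union of all the sets is the whole coset ξ(Q) + GRM_p(n+t+1, 1)
    ((⋃ d : Fin n → ZMod p, ⋃ e : Fin (t + 1) → ZMod p, ⋃ e' : ZMod p, Zset d e e') =
      {v | ∃ w ∈ GRM1 p (n + t + 1), v = xiVec p (n + t + 1) Q + w}) ∧
    -- the coset has size p^{n'+1} = p^{n+t+2}
    ({v | ∃ w ∈ GRM1 p (n + t + 1), v = xiVec p (n + t + 1) Q + w}.ncard =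
      p ^ (n + t + 2)) ∧
    -- and there are p^{n'+1−t} distinct such ZCZ sequence sets
    Set.ncard {S : Set (Fin (p ^ (n + t + 1)) → ZMod p) |
        ∃ (d : Fin n → ZMod p) (e : Fin (t + 1) → ZMod p) (e' : ZMod p),
          S = Zset d e e'} = p ^ (n + 2) := by
  let J : Fin t → Fin (n + t + 1) := fun r => Fin.castLE (by omega) (π r (m r - 1))
  have hJ : Function.Injective J :=
    (Fin.castLE_injective _).comp (injective_last_of_injective_sigma hm hπ.injective)
  let f := cosetVec p (n + t + 1) Q
  have hf : Function.Injective f := cosetVec_injective p (n + t + 1) Q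
  let ι := (coeffsAt (ZMod p) J).toAddMonoidHom
  have hι : Function.Injective ι := coeffsAt_injective hJ
  -- `Fin.append d e` lives on `Fin (n + (t + 1))`, only definitionally `Fin (n + t + 1)`,
  -- so `sum_append_mul` cannot be used by `rw`.
  obtain rfl :
      Zset = fun d e e' => cosetImage f ι (e', (Fin.append d e : Fin (n + (t + 1)) → _)) :=
    funext fun d => funext fun e => funext fun e' => (hZ d e e').trans <|
      setOf_xiVec_eq_cosetImage Q _ fun x => by
        linear_combination (sum_append_mul (k := t + 1) d e x).symm
  have hcardH : Nat.card (Fin t → ZMod p) = p ^ t := by simp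
  have hcardG : Nat.card (ZMod p × (Fin (n + t + 1) → ZMod p)) = p ^ (n + t + 2) := by
    rw [Nat.card_prod, Nat.card_zmod, Nat.card_fun, Nat.card_zmod, Nat.card_fin, ← pow_succ']
  refine ⟨fun _ _ _ _ _ _ => cosetImage_eq_or_disjoint ι hf _ _,
    fun _ _ _ => (ncard_cosetImage ι hf hι _).trans hcardH, ?_, ?_, ?_⟩
  · rw [← range_cosetVec, ← iUnion_cosetImage ι]
    ext v
    simp only [Set.mem_iUnion]
    exact exists_append_iff (k := t + 1) (v ∈ cosetImage f ι ·)
  · rw [← range_cosetVec, Set.ncard_range_of_injective hf, hcardG]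
  · have hsets : {S | ∃ (d : Fin n → ZMod p) (e : Fin (t + 1) → ZMod p) (e' : ZMod p),
        S = cosetImage f ι (e', (Fin.append d e : Fin (n + (t + 1)) → _))} =
        Set.range (cosetImage f ι) := Set.ext fun S =>
      (exists_append_iff (k := t + 1) (S = cosetImage f ι ·)).trans <|
        exists_congr fun _ => eq_comm
    have hlagrange := ncard_range_cosetImage_mul_card ι hf hι
    rw [← hsets, hcardH, hcardG] at hlagrange
    exact Nat.eq_of_mul_eq_mul_right (pow_pos (NeZero.pos p) t) <|
      hlagrange.trans (by ring)
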